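/- Let n ≥ 3 be an odd integer and G = D_n the dihedral group of order 2n. There exist short exact sequences of G-lattices 0 → N₋ → M̃₊ → ℤ[G/⟨σ⟩] → 0 and 0 → N₊ → M̃₋ → ℤ[G/⟨σ⟩] → 0, and neither of these sequences splits as a sequence of ℤ[G]-modules. -/

import Mathlib

open DihedralGroup

/-!
The embedding `N∓ → M̃±` is the cyclic difference operator `u ↦ σ u - u` on `⊕ ℤ wᵢ`, after
placing `u₁, …, u_{n-1}` at the positions `c, …, c + n - 2` for the half `c = 1/2` of `ℤ/n`
(this choice makes it commute with `τ`); its image is the sum-zero part of `⊕ ℤ wᵢ`.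
The quotient map is `x ↦ (ℓ x, ℓ (τ x))` for the `σ`-invariant functional
`ℓ = ∑ wᵢ* + k w*`, which is unimodular when `ε (n - 2k) = 1`, where `ε = ±1` is the sign of
`τ` on the `wᵢ`; `k = (n ∓ 1)/2` works because `n` is odd.
A splitting would send `t₀` to a `σ`-invariant vector `a (w₀ + ⋯ + w_{n-1}) + b w` mapping to
`(1, 0)`, and solving the two equations gives `n (2a - ε) = 1`, impossible for `n > 1`.
-/

namespace DihedralLattice

variable {n : ℕ}

section Generators

variable [NeZero n] {R V W : Type*} [CommSemiring R] [AddCommMonoid V] [Module R V]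
  [AddCommMonoid W] [Module R W]

theorem comp_eq_comp_of_r_one_of_sr_zero {ρ₁ : Representation R (DihedralGroup n) V}
    {ρ₂ : Representation R (DihedralGroup n) W} {f : V →ₗ[R] W}
    (hr : f ∘ₗ ρ₁ (r 1) = ρ₂ (r 1) ∘ₗ f) (hsr : f ∘ₗ ρ₁ (sr 0) = ρ₂ (sr 0) ∘ₗ f)
    (g : DihedralGroup n) : f ∘ₗ ρ₁ g = ρ₂ g ∘ₗ f := by
  let S : Submonoid (DihedralGroup n) :=
    { carrier := {g | f ∘ₗ ρ₁ g = ρ₂ g ∘ₗ f}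
      one_mem' := by ext; simp
      mul_mem' := fun {g h} (hg : _ = _) (hh : _ = _) => show _ = _ by
        rw [map_mul, map_mul, Module.End.mul_eq_comp, Module.End.mul_eq_comp,
          ← LinearMap.comp_assoc, hg, LinearMap.comp_assoc, hh, LinearMap.comp_assoc] }
  have hrS : ∀ k, r k ∈ S := fun k => by
    rw [← ZMod.natCast_zmod_val k, ← r_one_pow]
    exact S.pow_mem hr k.val
  show g ∈ S
  cases g with
  | r k => exact hrS k
  | sr k => simpa only [sr_mul_r, zero_add] using S.mul_mem hsr (hrS k)

-- Frobenius reciprocity for `ℤ[G/⟨σ⟩]`.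
theorem prod_comp_sr_zero_comp {ρ : Representation R (DihedralGroup n) V}
    {ρA : Representation R (DihedralGroup n) (R × R)} (hAr : ∀ x, ρA (r 1) x = x)
    (hAsr : ∀ x, ρA (sr 0) x = (x.2, x.1)) {ℓ : V →ₗ[R] R} (hℓ : ∀ x, ℓ (ρ (r 1) x) = ℓ x)
    (g : DihedralGroup n) :
    ℓ.prod (ℓ ∘ₗ ρ (sr 0)) ∘ₗ ρ g = ρA g ∘ₗ ℓ.prod (ℓ ∘ₗ ρ (sr 0)) := by
  have hℓ' : ∀ x, ℓ (ρ (r (-1)) x) = ℓ x := fun x => by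
    rw [← hℓ, ← Module.End.mul_apply, ← map_mul, r_mul_r, add_neg_cancel,
      ← one_def, map_one, Module.End.one_apply]
  refine comp_eq_comp_of_r_one_of_sr_zero ?_ ?_ g <;> ext x
  · simp [hAr, hℓ]
  · simp only [LinearMap.comp_apply, hAr, LinearMap.prod_apply, Function.prod_apply]
    rw [← hℓ' (ρ (sr 0) x)]
    simp [← Module.End.mul_apply, ← map_mul]
  · simp [hAsr]
  · simp [hAsr, ← Module.End.mul_apply, ← map_mul]

end Generators

section CyclicDifference

theorem single_comp_sub_one (a : ZMod n) :
    (fun i => (Pi.single a 1 : ZMod n → ℤ) (i - 1)) = Pi.single (a + 1) 1 := by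
  ext i
  simp only [Pi.single_apply, sub_eq_iff_eq_add]

def cyclicDiff : Module.End ℤ (ZMod n → ℤ) :=
  LinearMap.funLeft ℤ ℤ (· - 1) - LinearMap.id

@[simp]
theorem cyclicDiff_apply (v : ZMod n → ℤ) (i : ZMod n) : cyclicDiff v i = v (i - 1) - v i := rfl

theorem cyclicDiff_single (a : ZMod n) :
    cyclicDiff (Pi.single a 1) = Pi.single (a + 1) 1 - Pi.single a 1 := by
  rw [← single_comp_sub_one]
  rfl

theorem cyclicDiff_const (b : ℤ) : cyclicDiff (fun _ : ZMod n => b) = 0 := by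
  ext
  simp

variable [NeZero n]

theorem sum_cyclicDiff (v : ZMod n → ℤ) : ∑ i, cyclicDiff v i = 0 := by
  simp only [cyclicDiff_apply, Finset.sum_sub_distrib, sub_eq_zero]
  exact (Equiv.subRight 1).sum_comp v

theorem apply_eq_apply_zero_of_forall_apply_sub_one {v : ZMod n → ℤ}
    (h : ∀ i, v (i - 1) = v i) (i : ZMod n) : v i = v 0 := by
  have hnat : ∀ k : ℕ, v k = v 0 := fun k => by
    induction k with
    | zero => simp
    | succ k ih => rw [← ih, ← h, Nat.cast_succ, add_sub_cancel_right]
  simpa using hnat i.val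

theorem sum_range_natCast (v : ZMod n → ℤ) : ∑ k ∈ Finset.range n, v k = ∑ i, v i := by
  rw [Finset.sum_range]
  refine Fintype.sum_bijective (fun k : Fin n => ((k : ℕ) : ZMod n))
    ⟨fun k l h => ?_, fun i => ?_⟩ _ _ fun _ => rfl
  · have := congrArg ZMod.val h
    rwa [ZMod.val_cast_of_lt k.isLt, ZMod.val_cast_of_lt l.isLt, ← Fin.ext_iff] at this
  · exact ⟨⟨i.val, i.val_lt⟩, i.natCast_zmod_val⟩

theorem natCast_sub_one_eq_neg_one : ((n - 1 : ℕ) : ZMod n) = -1 := by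
  simp [Nat.cast_sub NeZero.one_le]

-- `u i = -(v 0 + ⋯ + v i)`, consistent around the cycle because `∑ v = 0`.
theorem exists_cyclicDiff_eq {v : ZMod n → ℤ} (hv : ∑ i, v i = 0) : ∃ u, cyclicDiff u = v := by
  refine ⟨fun i => -∑ k ∈ Finset.range (i.val + 1), v k, funext fun i => ?_⟩
  obtain ⟨k, hk, rfl⟩ : ∃ k < n, (k : ZMod n) = i := ⟨i.val, i.val_lt, i.natCast_zmod_val⟩
  rcases k with _ | k
  · have hlast : ((0 : ℕ) : ZMod n) - 1 = ((n - 1 : ℕ) : ZMod n) := by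
      simp [natCast_sub_one_eq_neg_one]
    rw [cyclicDiff_apply, hlast, ZMod.val_cast_of_lt (Nat.sub_lt hk one_pos),
      Nat.sub_add_cancel NeZero.one_le, sum_range_natCast, hv]
    simp
  · have hprev : ((k + 1 : ℕ) : ZMod n) - 1 = k := by push_cast; ring
    simp only [cyclicDiff_apply, hprev, ZMod.val_cast_of_lt hk,
      ZMod.val_cast_of_lt (Nat.lt_of_succ_lt hk), Finset.sum_range_succ _ (k + 1)]
    ring

end CyclicDifference

section Embedding

def embedAt (c : ZMod n) (j : Fin (n - 1)) : ZMod n := c + (j : ℕ)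

theorem embedAt_injective (c : ZMod n) : Function.Injective (embedAt c) := fun j l h => by
  have := congrArg ZMod.val (add_left_cancel h)
  rwa [ZMod.val_cast_of_lt (by omega), ZMod.val_cast_of_lt (by omega), ← Fin.ext_iff] at this

theorem embedAt_succ (c : ZMod n) (j : Fin (n - 1)) (h : (j : ℕ) + 1 < n - 1) :
    embedAt c ⟨j + 1, h⟩ = embedAt c j + 1 := by
  simp [embedAt, add_assoc]

theorem embedAt_last (hn : 2 ≤ n) (c : ZMod n) : embedAt c ⟨n - 2, by omega⟩ + 1 = c - 1 := by
  have : ((n - 2 : ℕ) : ZMod n) = -2 := by simp [Nat.cast_sub hn]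
  simp only [embedAt, this]
  ring

theorem embedAt_rev {c : ZMod n} (hc : c + c = 1) (j : Fin (n - 1)) :
    embedAt c j.rev = -embedAt c j - 1 := by
  have hrev : (j.rev : ℕ) + (j + 2) = n := by
    have := j.isLt
    rw [Fin.val_rev]
    omega
  have := congrArg (Nat.cast : ℕ → ZMod n) hrev
  push_cast [ZMod.natCast_self] at this
  simp only [embedAt]
  linear_combination this + hc

noncomputable def extendAt (c : ZMod n) : (Fin (n - 1) → ℤ) →ₗ[ℤ] (ZMod n → ℤ) :=
  Function.ExtendByZero.linearMap ℤ (embedAt c)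

theorem extendAt_apply_embedAt (c : ZMod n) (x : Fin (n - 1) → ℤ) (j : Fin (n - 1)) :
    extendAt c x (embedAt c j) = x j :=
  (embedAt_injective c).extend_apply _ _ _

variable [NeZero n]

theorem range_embedAt (c : ZMod n) : Set.range (embedAt c) = {c - 1}ᶜ := by
  ext i
  simp only [Set.mem_range, Set.mem_compl_singleton_iff, embedAt]
  constructor
  · rintro ⟨j, rfl⟩ h
    have hj : ((j : ℕ) : ZMod n) = ((n - 1 : ℕ) : ZMod n) := by
      rw [natCast_sub_one_eq_neg_one]
      linear_combination h
    have := congrArg ZMod.val hj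
    rw [ZMod.val_cast_of_lt (by omega), ZMod.val_cast_of_lt (by omega)] at this
    omega
  · intro hi
    have hlt : (i - c).val < n - 1 := by
      refine lt_of_le_of_ne (Nat.le_sub_one_of_lt (i - c).val_lt) fun h => hi ?_
      have := (i - c).natCast_zmod_val
      rw [h, natCast_sub_one_eq_neg_one] at this
      linear_combination -this
    exact ⟨⟨_, hlt⟩, by simp⟩

theorem embedAt_ne_sub_one (c : ZMod n) (j : Fin (n - 1)) : embedAt c j ≠ c - 1 := by
  simpa [range_embedAt] using Set.mem_range_self (f := embedAt c) j

theorem extendAt_apply_sub_one (c : ZMod n) (x : Fin (n - 1) → ℤ) : extendAt c x (c - 1) = 0 :=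
  Function.extend_apply' _ _ _ fun ⟨j, hj⟩ => embedAt_ne_sub_one c j hj

theorem extendAt_comp_embedAt {c : ZMod n} {u : ZMod n → ℤ} (hu : u (c - 1) = 0) :
    extendAt c (u ∘ embedAt c) = u := by
  funext i
  by_cases hi : i = c - 1
  · rw [hi, extendAt_apply_sub_one, hu]
  · obtain ⟨j, rfl⟩ : i ∈ Set.range (embedAt c) := by rwa [range_embedAt]
    exact extendAt_apply_embedAt c _ j

theorem extendAt_single (c : ZMod n) (j : Fin (n - 1)) :
    extendAt c (Pi.single j 1) = Pi.single (embedAt c j) 1 := by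
  rw [← extendAt_comp_embedAt (Pi.single_eq_of_ne' (embedAt_ne_sub_one c j) 1)]
  congr 1
  ext l
  simp [Pi.single_apply, (embedAt_injective c).eq_iff]

theorem extendAt_const_one (c : ZMod n) :
    extendAt c (fun _ => 1) = (fun _ => 1) - Pi.single (c - 1) 1 := by
  rw [← extendAt_comp_embedAt (c := c) (u := (fun _ => 1) - Pi.single (c - 1) 1) (by simp)]
  congr 1
  ext j
  simp [embedAt_ne_sub_one]

end Embedding

section Lattices

-- `σ` and `τ` on `M̃₊` (`ε = 1`) and `M̃₋` (`ε = -1`), for `x = ∑ x.1 i • wᵢ + x.2 • w`.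
def rotate : Module.End ℤ ((ZMod n → ℤ) × ℤ) :=
  (LinearMap.funLeft ℤ ℤ (· - 1)).prodMap LinearMap.id

theorem rotate_apply (x : (ZMod n → ℤ) × ℤ) : rotate x = (fun i => x.1 (i - 1), x.2) := rfl

theorem rotate_single (a : ZMod n) : rotate (Pi.single a 1, 0) = (Pi.single (a + 1) 1, 0) := by
  rw [rotate_apply, single_comp_sub_one]

def reflect (ε : ℤ) : Module.End ℤ ((ZMod n → ℤ) × ℤ) where
  toFun x := (fun i => ε * (x.1 (-i) + x.2), -(ε * x.2))
  map_add' x y := by ext <;> simp <;> ring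
  map_smul' b x := by ext <;> simp <;> ring

theorem reflect_apply (ε : ℤ) (x : (ZMod n → ℤ) × ℤ) :
    reflect ε x = (fun i => ε * (x.1 (-i) + x.2), -(ε * x.2)) := rfl

theorem reflect_single (ε : ℤ) (a : ZMod n) :
    reflect ε (Pi.single a 1, 0) = ε • (Pi.single (-a) 1, 0) := by
  ext i <;> simp [reflect_apply, Pi.single_apply, neg_eq_iff_eq_neg]

noncomputable def diffEmbedding (c : ZMod n) : (Fin (n - 1) → ℤ) →ₗ[ℤ] (ZMod n → ℤ) × ℤ :=
  LinearMap.inl ℤ _ ℤ ∘ₗ cyclicDiff ∘ₗ extendAt c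

theorem diffEmbedding_apply (c : ZMod n) (x : Fin (n - 1) → ℤ) :
    diffEmbedding c x = (cyclicDiff (extendAt c x), 0) := rfl

variable [NeZero n]

theorem eq_rotate {T : Module.End ℤ ((ZMod n → ℤ) × ℤ)}
    (h : ∀ i, T (Pi.single i 1, 0) = (Pi.single (i + 1) 1, 0)) (hw : T (0, 1) = (0, 1)) :
    T = rotate :=
  LinearMap.prod_ext (LinearMap.pi_ext' fun i => LinearMap.ext_ring <| by simp [h, rotate_single])
    (LinearMap.ext_ring <| by simp [hw, rotate_apply]; rfl)

theorem eq_reflect {T : Module.End ℤ ((ZMod n → ℤ) × ℤ)} {ε : ℤ}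
    (h : ∀ i, T (Pi.single i 1, 0) = (ε • Pi.single (-i) 1, 0))
    (hw : T (0, 1) = (ε • ∑ i, Pi.single i 1, -ε)) :
    T = reflect ε :=
  LinearMap.prod_ext (LinearMap.pi_ext' fun i => LinearMap.ext_ring <| by simp [h, reflect_single])
    (LinearMap.ext_ring <| by ext <;> simp [hw, reflect_apply, Finset.sum_apply, Pi.single_apply])

theorem diffEmbedding_single (c : ZMod n) (j : Fin (n - 1)) :
    diffEmbedding c (Pi.single j 1) =
      (Pi.single (embedAt c j + 1) 1, 0) - (Pi.single (embedAt c j) 1, 0) := by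
  rw [diffEmbedding_apply, extendAt_single, cyclicDiff_single, Prod.mk_sub_mk, sub_zero]

theorem diffEmbedding_injective (c : ZMod n) : Function.Injective (diffEmbedding c) := by
  refine (injective_iff_map_eq_zero _).2 fun x hx => funext fun j => ?_
  have hconst := apply_eq_apply_zero_of_forall_apply_sub_one (v := extendAt c x) fun i =>
    sub_eq_zero.1 (congrFun (congrArg Prod.fst hx) i)
  rw [Pi.zero_apply, ← extendAt_apply_embedAt c x j, hconst, ← hconst (c - 1),
    extendAt_apply_sub_one]

theorem mem_range_diffEmbedding_iff (c : ZMod n) (x : (ZMod n → ℤ) × ℤ) :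
    x ∈ LinearMap.range (diffEmbedding c) ↔ ∑ i, x.1 i = 0 ∧ x.2 = 0 := by
  constructor
  · rintro ⟨y, rfl⟩
    exact ⟨sum_cyclicDiff _, rfl⟩
  · rintro ⟨hsum, hz⟩
    obtain ⟨u, hu⟩ := exists_cyclicDiff_eq hsum
    refine ⟨(u - fun _ => u (c - 1)) ∘ embedAt c, ?_⟩
    rw [diffEmbedding_apply, extendAt_comp_embedAt (by simp), map_sub, cyclicDiff_const, hu,
      sub_zero, ← hz]

theorem diffEmbedding_comp_eq_rotate_comp (hn : 2 ≤ n) (c : ZMod n)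
    {T : Module.End ℤ (Fin (n - 1) → ℤ)}
    (h : ∀ (j : Fin (n - 1)) (h : (j : ℕ) + 1 < n - 1),
      T (Pi.single j 1) = Pi.single (⟨(j : ℕ) + 1, h⟩ : Fin (n - 1)) 1)
    (hlast : T (Pi.single (⟨n - 2, by omega⟩ : Fin (n - 1)) 1) = -∑ i, Pi.single i 1) :
    diffEmbedding c ∘ₗ T = rotate ∘ₗ diffEmbedding c := by
  have hlt : n - 2 < n - 1 := by omega
  refine LinearMap.pi_ext' fun j => LinearMap.ext_ring ?_
  simp only [LinearMap.comp_apply, LinearMap.coe_single]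
  rw [diffEmbedding_single, map_sub, rotate_single, rotate_single]
  by_cases hj : (j : ℕ) + 1 < n - 1
  · rw [h j hj, diffEmbedding_single, embedAt_succ]
  · obtain rfl : j = ⟨n - 2, hlt⟩ := Fin.ext (show (j : ℕ) = n - 2 by omega)
    rw [hlast, map_neg, Finset.univ_sum_single (fun _ => (1 : ℤ)), diffEmbedding_apply,
      extendAt_const_one, map_sub, cyclicDiff_const, cyclicDiff_single, embedAt_last hn,
      sub_add_cancel]
    ext <;> simp

theorem diffEmbedding_comp_eq_reflect_comp {c : ZMod n} (hc : c + c = 1) (ε : ℤ)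
    {T : Module.End ℤ (Fin (n - 1) → ℤ)}
    (h : ∀ j : Fin (n - 1), T (Pi.single j 1) = -(ε • Pi.single j.rev 1)) :
    diffEmbedding c ∘ₗ T = reflect ε ∘ₗ diffEmbedding c := by
  refine LinearMap.pi_ext' fun j => LinearMap.ext_ring ?_
  simp only [LinearMap.comp_apply, LinearMap.coe_single]
  rw [h, map_neg, map_smul, diffEmbedding_single, diffEmbedding_single, map_sub, reflect_single,
    reflect_single, embedAt_rev hc]
  simp only [neg_sub, sub_add_cancel, smul_sub, neg_add']

def augment (k : ℤ) : ((ZMod n → ℤ) × ℤ) →ₗ[ℤ] ℤ where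
  toFun x := ∑ i, x.1 i + k * x.2
  map_add' x y := by simp [Finset.sum_add_distrib]; ring
  map_smul' b x := by
    simp only [Prod.smul_fst, Prod.smul_snd, Pi.smul_apply, smul_eq_mul, ← Finset.mul_sum,
      RingHom.id_apply]
    ring

theorem augment_apply (k : ℤ) (x : (ZMod n → ℤ) × ℤ) : augment k x = ∑ i, x.1 i + k * x.2 := rfl

theorem augment_rotate (k : ℤ) (x : (ZMod n → ℤ) × ℤ) : augment k (rotate x) = augment k x := by
  rw [augment_apply, augment_apply, rotate_apply]
  congr 1
  exact (Equiv.subRight 1).sum_comp x.1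

def augmentPair (ε k : ℤ) : ((ZMod n → ℤ) × ℤ) →ₗ[ℤ] ℤ × ℤ :=
  (augment k).prod (augment k ∘ₗ reflect ε)

theorem augmentPair_apply (ε k : ℤ) (x : (ZMod n → ℤ) × ℤ) :
    augmentPair ε k x = (∑ i, x.1 i + k * x.2, ε * (∑ i, x.1 i + (n - k) * x.2)) := by
  have hneg : ∑ i, x.1 (-i) = ∑ i, x.1 i := Equiv.sum_comp (Equiv.neg _) x.1
  simp only [augmentPair, LinearMap.prod_apply, Function.prod_apply, LinearMap.comp_apply,
    augment_apply, reflect_apply, Finset.sum_add_distrib, ← Finset.mul_sum, Finset.sum_const,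
    Finset.card_univ, ZMod.card, nsmul_eq_mul, hneg]
  congr 1
  ring

section Unimodular

variable {ε k : ℤ}

theorem augmentPair_surjective (hk : ε * (n - 2 * k) = 1) :
    Function.Surjective (augmentPair (n := n) ε k) := fun y => by
  refine ⟨(Pi.single 0 (y.1 - k * (y.2 - ε * y.1)), y.2 - ε * y.1), ?_⟩
  rw [augmentPair_apply, Finset.sum_pi_single']
  ext
  · simp
  · simp
    linear_combination (y.2 - ε * y.1) * hk

theorem augmentPair_eq_zero_iff (hk : ε * (n - 2 * k) = 1) (x : (ZMod n → ℤ) × ℤ) :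
    augmentPair ε k x = 0 ↔ ∑ i, x.1 i = 0 ∧ x.2 = 0 := by
  rw [augmentPair_apply, Prod.mk_eq_zero]
  constructor
  · rintro ⟨h₁, h₂⟩
    have hz : x.2 = 0 := by linear_combination h₂ - ε * h₁ - x.2 * hk
    exact ⟨by linear_combination h₁ - k * hz, hz⟩
  · rintro ⟨h₁, h₂⟩
    simp [h₁, h₂]

theorem augmentPair_ne_of_rotate_eq (hk : ε * (n - 2 * k) = 1) (hn : n ≠ 1)
    {x : (ZMod n → ℤ) × ℤ} (hx : rotate x = x) :
    augmentPair ε k x ≠ (1, 0) := by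
  obtain ⟨v, z⟩ := x
  have hv : ∀ i, v i = v 0 := apply_eq_apply_zero_of_forall_apply_sub_one fun i =>
    congrFun (congrArg Prod.fst hx) i
  rw [augmentPair_apply, Finset.sum_congr rfl fun i _ => hv i, Finset.sum_const, Finset.card_univ,
    ZMod.card, nsmul_eq_mul, Ne, Prod.mk.injEq]
  rintro ⟨h₁, h₂⟩
  dsimp only at h₁ h₂
  have hz : z = -ε := by linear_combination h₂ - ε * h₁ - z * hk
  have hunit : (n : ℤ) * (2 * v 0 - ε) = 1 := by linear_combination 2 * h₁ - 2 * k * hz - hk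
  exact hn (by exact_mod_cast Int.eq_one_of_mul_eq_one_right (Int.natCast_nonneg n) hunit)

end Unimodular

theorem exists_nonsplit_extension (hn : 2 ≤ n) {ε k : ℤ} (hk : ε * (n - 2 * k) = 1)
    {c : ZMod n} (hc : c + c = 1)
    (ρN : Representation ℤ (DihedralGroup n) (Fin (n - 1) → ℤ))
    (hNσ : ∀ (j : Fin (n - 1)) (h : (j : ℕ) + 1 < n - 1),
      ρN (r 1) (Pi.single j 1) = Pi.single (⟨(j : ℕ) + 1, h⟩ : Fin (n - 1)) 1)
    (hNσ' : ρN (r 1) (Pi.single (⟨n - 2, by omega⟩ : Fin (n - 1)) 1)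
      = -∑ i : Fin (n - 1), Pi.single i 1)
    (hNτ : ∀ j : Fin (n - 1), ρN (sr 0) (Pi.single j 1) = -(ε • Pi.single j.rev 1))
    (ρM : Representation ℤ (DihedralGroup n) ((ZMod n → ℤ) × ℤ))
    (hMσ : ρM (r 1) = rotate) (hMτ : ρM (sr 0) = reflect ε)
    (ρA : Representation ℤ (DihedralGroup n) (ℤ × ℤ))
    (hAσ : ∀ x : ℤ × ℤ, ρA (r 1) x = x)
    (hAτ : ∀ x : ℤ × ℤ, ρA (sr 0) x = (x.2, x.1)) :
    ∃ (f : (Fin (n - 1) → ℤ) →ₗ[ℤ] ((ZMod n → ℤ) × ℤ))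
        (q : ((ZMod n → ℤ) × ℤ) →ₗ[ℤ] ℤ × ℤ),
      (∀ (g : DihedralGroup n) x, f (ρN g x) = ρM g (f x)) ∧
      (∀ (g : DihedralGroup n) x, q (ρM g x) = ρA g (q x)) ∧
      Function.Injective f ∧ Function.Surjective q ∧
      LinearMap.range f = LinearMap.ker q ∧
      ¬ ∃ s : ℤ × ℤ →ₗ[ℤ] ((ZMod n → ℤ) × ℤ),
          (∀ (g : DihedralGroup n) y, ρM g (s y) = s (ρA g y)) ∧
          q.comp s = LinearMap.id := by
  refine ⟨diffEmbedding c, augmentPair ε k, fun g x => ?_, fun g x => ?_,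
    diffEmbedding_injective c, augmentPair_surjective hk, ?_, ?_⟩
  · have hr := diffEmbedding_comp_eq_rotate_comp hn c hNσ hNσ'
    have hsr := diffEmbedding_comp_eq_reflect_comp hc ε hNτ
    rw [← hMσ] at hr
    rw [← hMτ] at hsr
    exact LinearMap.congr_fun (comp_eq_comp_of_r_one_of_sr_zero hr hsr g) x
  · have := prod_comp_sr_zero_comp hAσ hAτ (ℓ := augment k)
      (fun x => by rw [hMσ, augment_rotate]) g
    rw [hMτ] at this
    exact LinearMap.congr_fun this x
  · ext x
    rw [mem_range_diffEmbedding_iff, LinearMap.mem_ker, augmentPair_eq_zero_iff hk]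
  · rintro ⟨s, hs, hqs⟩
    refine augmentPair_ne_of_rotate_eq hk (by omega) (x := s (1, 0)) ?_ (LinearMap.congr_fun hqs _)
    rw [← hMσ, hs, hAσ]

end Lattices

end DihedralLattice

/-- **Hoshi–Kang–Yamasaki, Lemma 4.5.**
Let `n ≥ 3` be odd and `G = Dₙ`, with `σ = r 1`, `τ = sr 0`.  `ρMp`/`ρMm` are the
rank-`(n+1)` lattices `M̃₊`/`M̃₋`, `ρNp`/`ρNm` are `N₊`/`N₋`, and `ρA` is `ℤ[G/⟨σ⟩]`.
There are short exact sequences `0 → N₋ → M̃₊ → ℤ[G/⟨σ⟩] → 0` and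
`0 → N₊ → M̃₋ → ℤ[G/⟨σ⟩] → 0` of `G`-lattices, and neither splits as a sequence of
`ℤ[G]`-modules. -/
theorem stmt7 (n : ℕ) (hn : 3 ≤ n) (hodd : Odd n) [NeZero n]
    (ρMp : Representation ℤ (DihedralGroup n) ((ZMod n → ℤ) × ℤ))
    (hMpσ : ∀ i : ZMod n, ρMp (r 1) (Pi.single i 1, 0) = (Pi.single (i + 1) 1, 0))
    (hMpσw : ρMp (r 1) (0, 1) = (0, 1))
    (hMpτ : ∀ i : ZMod n, ρMp (sr 0) (Pi.single i 1, 0) = (Pi.single (-i) 1, 0))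
    (hMpτw : ρMp (sr 0) (0, 1) = (∑ i : ZMod n, Pi.single i 1, -1))
    (ρMm : Representation ℤ (DihedralGroup n) ((ZMod n → ℤ) × ℤ))
    (hMmσ : ∀ i : ZMod n, ρMm (r 1) (Pi.single i 1, 0) = (Pi.single (i + 1) 1, 0))
    (hMmσw : ρMm (r 1) (0, 1) = (0, 1))
    (hMmτ : ∀ i : ZMod n, ρMm (sr 0) (Pi.single i 1, 0) = (-Pi.single (-i) 1, 0))
    (hMmτw : ρMm (sr 0) (0, 1) = (-∑ i : ZMod n, Pi.single i 1, 1))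
    (ρNp : Representation ℤ (DihedralGroup n) (Fin (n - 1) → ℤ))
    (hNpσ : ∀ (j : Fin (n - 1)) (h : (j : ℕ) + 1 < n - 1),
      ρNp (r 1) (Pi.single j 1) = Pi.single (⟨(j : ℕ) + 1, h⟩ : Fin (n - 1)) 1)
    (hNpσ' : ρNp (r 1) (Pi.single (⟨n - 2, by omega⟩ : Fin (n - 1)) 1)
      = -∑ i : Fin (n - 1), Pi.single i 1)
    (hNpτ : ∀ j : Fin (n - 1), ρNp (sr 0) (Pi.single j 1) = Pi.single j.rev 1)
    (ρNm : Representation ℤ (DihedralGroup n) (Fin (n - 1) → ℤ))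
    (hNmσ : ∀ (j : Fin (n - 1)) (h : (j : ℕ) + 1 < n - 1),
      ρNm (r 1) (Pi.single j 1) = Pi.single (⟨(j : ℕ) + 1, h⟩ : Fin (n - 1)) 1)
    (hNmσ' : ρNm (r 1) (Pi.single (⟨n - 2, by omega⟩ : Fin (n - 1)) 1)
      = -∑ i : Fin (n - 1), Pi.single i 1)
    (hNmτ : ∀ j : Fin (n - 1), ρNm (sr 0) (Pi.single j 1) = -Pi.single j.rev 1)
    (ρA : Representation ℤ (DihedralGroup n) (ℤ × ℤ))
    (hAσ : ∀ x : ℤ × ℤ, ρA (r 1) x = x)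
    (hAτ : ∀ x : ℤ × ℤ, ρA (sr 0) x = (x.2, x.1)) :
    (∃ (f : (Fin (n - 1) → ℤ) →ₗ[ℤ] ((ZMod n → ℤ) × ℤ))
        (q : ((ZMod n → ℤ) × ℤ) →ₗ[ℤ] ℤ × ℤ),
      (∀ (g : DihedralGroup n) x, f (ρNm g x) = ρMp g (f x)) ∧
      (∀ (g : DihedralGroup n) x, q (ρMp g x) = ρA g (q x)) ∧
      Function.Injective f ∧ Function.Surjective q ∧
      LinearMap.range f = LinearMap.ker q ∧
      ¬ ∃ s : ℤ × ℤ →ₗ[ℤ] ((ZMod n → ℤ) × ℤ),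
          (∀ (g : DihedralGroup n) y, ρMp g (s y) = s (ρA g y)) ∧
          q.comp s = LinearMap.id) ∧
    (∃ (f : (Fin (n - 1) → ℤ) →ₗ[ℤ] ((ZMod n → ℤ) × ℤ))
        (q : ((ZMod n → ℤ) × ℤ) →ₗ[ℤ] ℤ × ℤ),
      (∀ (g : DihedralGroup n) x, f (ρNp g x) = ρMm g (f x)) ∧
      (∀ (g : DihedralGroup n) x, q (ρMm g x) = ρA g (q x)) ∧
      Function.Injective f ∧ Function.Surjective q ∧
      LinearMap.range f = LinearMap.ker q ∧
      ¬ ∃ s : ℤ × ℤ →ₗ[ℤ] ((ZMod n → ℤ) × ℤ),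
          (∀ (g : DihedralGroup n) y, ρMm g (s y) = s (ρA g y)) ∧
          q.comp s = LinearMap.id) := by
  obtain ⟨m, hm⟩ := hodd
  obtain ⟨c, hc⟩ : ∃ c : ZMod n, c + c = 1 :=
    ⟨(m + 1 : ℕ), by rw [← Nat.cast_add, show m + 1 + (m + 1) = n + 1 by omega]; simp⟩
  open DihedralLattice in
  exact ⟨exists_nonsplit_extension (by omega) (ε := 1) (k := m) (by push_cast [hm]; ring) hc
      ρNm hNmσ hNmσ' (by simpa using hNmτ) ρMp (eq_rotate hMpσ hMpσw)
      (eq_reflect (by simpa using hMpτ) (by simpa using hMpτw)) ρA hAσ hAτ,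
    exists_nonsplit_extension (by omega) (ε := -1) (k := m + 1) (by push_cast [hm]; ring) hc
      ρNp hNpσ hNpσ' (by simpa using hNpτ) ρMm (eq_rotate hMmσ hMmσw)
      (eq_reflect (by simpa using hMmτ) (by simpa using hMmτw)) ρA hAσ hAτ⟩
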